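/- arXiv:1805.09356 — 4 statements merged into one kernel-verified Lean document; each statement's English description precedes it below -/
import Mathlib

section
/- Let G be a finite group acting linearly and faithfully on a finite dimensional k-vector space V over an algebraically closed field k of characteristic zero. If λ and λ' are irreducible representations of G, then there exists a non-negative integer i such that Hom_G(λ', λ ⊗ V^{⊗i}) ≠ 0. -/
open CategoryTheory MonoidalCategory

section Auxiliary

open Polynomial

private lemma mckay_real_ms (r : Multiset ℝ) (h : ∀ x ∈ r, x ≤ 1)
    (hs : r.sum = Multiset.card r) : ∀ x ∈ r, x = 1 := by
  induction r using Multiset.induction with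
  | empty => simp
  | cons a r ih =>
    have ha : a ≤ 1 := h a (Multiset.mem_cons_self a r)
    have hr : r.sum ≤ (Multiset.card r : ℝ) := by
      simpa using Multiset.sum_le_card_nsmul r 1 (fun x hx => h x (Multiset.mem_cons_of_mem hx))
    rw [Multiset.sum_cons, Multiset.card_cons] at hs
    push_cast at hs
    have ha1 : a = 1 := by linarith
    have hr1 : r.sum = (Multiset.card r : ℝ) := by linarith
    intro x hx
    rcases Multiset.mem_cons.1 hx with h1 | h2
    · exact h1.trans ha1
    · exact ih (fun y hy => h y (Multiset.mem_cons_of_mem hy)) hr1 x h2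

private lemma mckay_abs_one_of_pow {m : ℕ} (hm : m ≠ 0) {z : ℂ} (h : z ^ m = 1) :
    ‖z‖ = 1 := by
  have h2 : ‖z‖ ^ m = 1 := by rw [← norm_pow, h, norm_one]
  have h0 : 0 ≤ ‖z‖ := norm_nonneg _
  by_contra hne
  rcases lt_or_gt_of_ne hne with hlt | hgt
  · have := pow_lt_one₀ h0 hlt hm
    simp [h2] at this
  · have := one_lt_pow₀ hgt hm
    simp [h2] at this

private lemma mckay_complex_ms {m : ℕ} (hm : m ≠ 0) (u : Multiset ℂ) (h : ∀ z ∈ u, z ^ m = 1)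
    (hs : u.sum = Multiset.card u) : ∀ z ∈ u, z = 1 := by
  have habs : ∀ z ∈ u, ‖z‖ = 1 := fun z hz => mckay_abs_one_of_pow hm (h z hz)
  have hre : ∀ z ∈ u, z.re ≤ 1 := by
    intro z hz
    calc z.re ≤ ‖z‖ := Complex.re_le_norm z
    _ = 1 := habs z hz
  have hresum : (u.map Complex.re).sum = (Multiset.card (u.map Complex.re) : ℝ) := by
    rw [Multiset.card_map]
    have : (u.sum).re = (Multiset.card u : ℝ) := by rw [hs]; simp
    rw [← this]
    exact (map_multiset_sum Complex.reAddGroupHom u).symm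
  have key := mckay_real_ms (u.map Complex.re) (by
    intro x hx
    rcases Multiset.mem_map.1 hx with ⟨z, hz, rfl⟩
    exact hre z hz) hresum
  intro z hz
  have h1 : z.re = 1 := key z.re (Multiset.mem_map_of_mem _ hz)
  have h2 : ‖z‖ = 1 := habs z hz
  have h3 : z.im = 0 := by
    have h5 : ‖z‖ ^ 2 = 1 := by rw [h2]; norm_num
    rw [Complex.sq_norm, Complex.normSq_apply] at h5
    nlinarith [h5]
  exact Complex.ext (by simp [h1]) (by simp [h3])

private lemma mckay_field_ms {k : Type} [Field k] [IsAlgClosed k] [CharZero k] {m : ℕ}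
    (hm : m ≠ 0) (s : Multiset k)
    (h : ∀ z ∈ s, z ^ m = 1) (hs : s.sum = Multiset.card s) : ∀ z ∈ s, z = 1 := by
  classical
  set F := AlgebraicClosure ℚ
  haveI : Algebra.IsAlgebraic ℚ F := AlgebraicClosure.isAlgebraic ℚ
  let j : F →+* k := (IsAlgClosed.lift (R := ℚ) (S := F) (M := k)).toRingHom
  let e : F →+* ℂ := (IsAlgClosed.lift (R := ℚ) (S := F) (M := ℂ)).toRingHom
  have hex : ∀ ζ : k, ζ ^ m = 1 → ∃ z : F, z ^ m = 1 ∧ j z = ζ := by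
    intro ζ hζ
    set p : F[X] := X ^ m - C 1 with hp
    have hpm : p.Monic := monic_X_pow_sub_C 1 hm
    have hsplits : p.Splits := IsAlgClosed.splits p
    have hmap : p.map j = X ^ m - C 1 := by
      simp [hp, Polynomial.map_sub, Polynomial.map_pow]
    have hmem : ζ ∈ (p.map j).roots := by
      rw [mem_roots ((hpm.map j).ne_zero)]
      simp [hmap, IsRoot, hζ]
    rw [hsplits.roots_map j] at hmem
    rcases Multiset.mem_map.1 hmem with ⟨z, hz, hjz⟩
    refine ⟨z, ?_, hjz⟩
    have := (mem_roots hpm.ne_zero).1 hz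
    simpa [hp, IsRoot, sub_eq_zero] using this
  let φ : k → F := fun ζ => if hζ : ∃ z : F, z ^ m = 1 ∧ j z = ζ then hζ.choose else 1
  have hφ : ∀ ζ ∈ s, (φ ζ) ^ m = 1 ∧ j (φ ζ) = ζ := by
    intro ζ hζ
    have hex' := hex ζ (h ζ hζ)
    simp only [φ, dif_pos hex']
    exact hex'.choose_spec
  have hjsum : j ((s.map φ).sum) = s.sum := by
    rw [map_multiset_sum, Multiset.map_map]
    have : Multiset.map (j ∘ φ) s = Multiset.map id s := by
      apply Multiset.map_congr rfl
      intro ζ hζ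
      exact (hφ ζ hζ).2
    rw [this, Multiset.map_id]
  have hFsum : (s.map φ).sum = (Multiset.card (s.map φ) : F) := by
    apply j.injective
    rw [hjsum, hs]
    push_cast [Multiset.card_map]
    rw [map_natCast]
  have hCsum : ((s.map φ).map e).sum = (Multiset.card ((s.map φ).map e) : ℂ) := by
    rw [← map_multiset_sum, hFsum]
    push_cast [Multiset.card_map]
    rw [map_natCast]
  have hCpow : ∀ w ∈ (s.map φ).map e, w ^ m = 1 := by
    intro w hw
    rcases Multiset.mem_map.1 hw with ⟨z, hz, rfl⟩
    rcases Multiset.mem_map.1 hz with ⟨ζ, hζ, rfl⟩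
    rw [← map_pow, (hφ ζ hζ).1, map_one]
  have key := mckay_complex_ms hm _ hCpow hCsum
  intro ζ hζ
  have h1 : e (φ ζ) = 1 := key _ (Multiset.mem_map_of_mem _ (Multiset.mem_map_of_mem _ hζ))
  have h2 : φ ζ = 1 := e.injective (by rw [h1, map_one])
  have := (hφ ζ hζ).2
  rw [h2, map_one] at this
  exact this.symm

private lemma mckay_eig_pow {k : Type} [Field k] {n : Type} [Fintype n] [DecidableEq n]
    (M : Matrix n n k) {m : ℕ} (h1 : M ^ m = 1) {μ : k} {v : n → k} (hv : v ≠ 0)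
    (hMv : M.mulVec v = μ • v) : μ ^ m = 1 := by
  have key : ∀ i : ℕ, (M ^ i).mulVec v = μ ^ i • v := by
    intro i
    induction i with
    | zero => simp [Matrix.one_mulVec]
    | succ i ih =>
      rw [pow_succ', pow_succ', ← Matrix.mulVec_mulVec, ih, Matrix.mulVec_smul, hMv, smul_smul,
        mul_comm]
  have hkm := key m
  rw [h1, Matrix.one_mulVec] at hkm
  obtain ⟨i, hi⟩ := Function.ne_iff.1 hv
  have h2 : v i = μ ^ m * v i := congrFun hkm i
  have h3 : (μ ^ m - 1) * v i = 0 := by linear_combination -h2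
  rcases mul_eq_zero.1 h3 with h | h
  · linear_combination h
  · exact absurd h hi

private lemma mckay_charpoly_root_eigen {k : Type} [Field k] {n : Type} [Fintype n]
    [DecidableEq n] (M : Matrix n n k) {μ : k} (hμ : M.charpoly.eval μ = 0) :
    ∃ v : n → k, v ≠ 0 ∧ M.mulVec v = μ • v := by
  have hdet : (Matrix.diagonal (fun _ : n => μ) - M).det = 0 := by
    have heq : (Matrix.diagonal (fun _ : n => μ) - M) =
        (evalRingHom μ).mapMatrix (Matrix.charmatrix M) := by
      ext i j
      by_cases h : i = j <;>
        simp [Matrix.charmatrix_apply, Matrix.diagonal, h, RingHom.mapMatrix_apply, Matrix.map]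
    rw [heq, ← RingHom.map_det]
    exact hμ
  obtain ⟨v, hv, hmv⟩ := Matrix.exists_mulVec_eq_zero_iff.2 hdet
  refine ⟨v, hv, ?_⟩
  rw [Matrix.sub_mulVec] at hmv
  have hdiag : (Matrix.diagonal (fun _ : n => μ)).mulVec v = μ • v := by
    ext i; simp [Matrix.mulVec_diagonal]
  rw [hdiag] at hmv
  exact (sub_eq_zero.1 hmv).symm

private lemma mckay_eigen_charpoly_root {k : Type} [Field k] {n : Type} [Fintype n]
    [DecidableEq n] (M : Matrix n n k) {μ : k} {v : n → k} (hv : v ≠ 0)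
    (hMv : M.mulVec v = μ • v) : M.charpoly.eval μ = 0 := by
  have heq : (Matrix.diagonal (fun _ : n => μ) - M) =
      (evalRingHom μ).mapMatrix (Matrix.charmatrix M) := by
    ext i j
    by_cases h : i = j <;>
      simp [Matrix.charmatrix_apply, Matrix.diagonal, h, RingHom.mapMatrix_apply, Matrix.map]
  have hdet : (Matrix.diagonal (fun _ : n => μ) - M).det = 0 := by
    apply Matrix.exists_mulVec_eq_zero_iff.1
    refine ⟨v, hv, ?_⟩
    rw [Matrix.sub_mulVec, hMv]
    have hdiag : (Matrix.diagonal (fun _ : n => μ)).mulVec v = μ • v := by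
      ext i; simp [Matrix.mulVec_diagonal]
    rw [hdiag, sub_self]
  rw [heq, ← RingHom.map_det] at hdet
  exact hdet

private lemma mckay_matrix_eq_one {k : Type} [Field k] [IsAlgClosed k] [CharZero k] {n : Type}
    [Fintype n] [DecidableEq n] (M : Matrix n n k) {m : ℕ} (hm : m ≠ 0) (h1 : M ^ m = 1)
    (htr : M.trace = (Fintype.card n : k)) : M = 1 := by
  classical
  cases isEmpty_or_nonempty n with
  | inl h => exact Subsingleton.elim _ _
  | inr hne =>
    have hmonic := Matrix.charpoly_monic M
    have hsplits : M.charpoly.Splits := IsAlgClosed.splits M.charpoly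
    have hcard : Multiset.card M.charpoly.roots = Fintype.card n := by
      rw [splits_iff_card_roots.1 hsplits, Matrix.charpoly_natDegree_eq_dim]
    have hsum : M.charpoly.roots.sum = (Multiset.card M.charpoly.roots : k) := by
      rw [hcard, ← htr, Matrix.trace_eq_sum_roots_charpoly]
    have hpow : ∀ μ ∈ M.charpoly.roots, μ ^ m = 1 := by
      intro μ hμ
      have hev : M.charpoly.eval μ = 0 := (mem_roots hmonic.ne_zero).1 hμ
      obtain ⟨v, hv, hMv⟩ := mckay_charpoly_root_eigen M hev
      exact mckay_eig_pow M h1 hv hMv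
    have hall : ∀ μ ∈ M.charpoly.roots, μ = 1 := mckay_field_ms hm _ hpow hsum
    set q := minpoly k M with hq
    have hint : IsIntegral k M := Matrix.isIntegral M
    have hdvd : q ∣ X ^ m - C 1 := by
      apply minpoly.dvd
      simp [map_pow, h1]
    have hsf : Squarefree q := by
      have hsep : (X ^ m - C (1 : k)).Separable :=
        separable_X_pow_sub_C 1 (by exact_mod_cast hm) one_ne_zero
      exact hsep.squarefree.squarefree_of_dvd hdvd
    have hqmonic : q.Monic := minpoly.monic hint
    have hqsplits : q.Splits := IsAlgClosed.splits q
    have hqroots : ∀ μ ∈ q.roots, μ = 1 := by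
      intro μ hμ
      have hroot : q.IsRoot μ := (mem_roots hqmonic.ne_zero).1 hμ
      have hroot' : (minpoly k (Matrix.toLin' M)).IsRoot μ := by
        rwa [Matrix.minpoly_toLin']
      obtain ⟨v, hv⟩ := (Module.End.hasEigenvalue_of_isRoot hroot').exists_hasEigenvector
      have hMv : M.mulVec v = μ • v := by
        have := hv.apply_eq_smul
        simpa [Matrix.toLin'_apply] using this
      exact hall μ ((mem_roots hmonic.ne_zero).2 (mckay_eigen_charpoly_root M hv.right hMv))
    have hq1 : q = X - C 1 := by
      have hqprod : q = (Multiset.map (fun a => X - C a) q.roots).prod :=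
        hqsplits.eq_prod_roots_of_monic hqmonic
      have hrepl : Multiset.map (fun a => X - C a) q.roots =
          Multiset.replicate (Multiset.card q.roots) (X - C 1) := by
        rw [Multiset.eq_replicate]
        constructor
        · rw [Multiset.card_map]
        · intro b hb
          rcases Multiset.mem_map.1 hb with ⟨a, ha, rfl⟩
          rw [hqroots a ha]
      have hcard1 : Multiset.card q.roots = 1 := by
        have hpos : 0 < q.natDegree := minpoly.natDegree_pos hint
        have hcards : Multiset.card q.roots = q.natDegree := splits_iff_card_roots.1 hqsplits
        by_contra hne1
        have h2le : 2 ≤ Multiset.card q.roots := by omega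
        have hdv : (X - C (1:k)) * (X - C 1) ∣ q := by
          rw [hqprod, hrepl, Multiset.prod_replicate]
          calc (X - C (1:k)) * (X - C 1) = (X - C 1) ^ 2 := (sq _).symm
          _ ∣ (X - C 1) ^ Multiset.card q.roots := pow_dvd_pow _ h2le
        have := hsf _ hdv
        exact (Polynomial.not_isUnit_X_sub_C 1) this
      rw [hqprod, hrepl, hcard1, Multiset.prod_replicate, pow_one]
    have haev := minpoly.aeval k M
    rw [← hq, hq1] at haev
    simp only [map_sub, aeval_X, aeval_C] at haev
    have : M - 1 = 0 := by simpa [Algebra.algebraMap_eq_smul_one] using haev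
    linear_combination (norm := abel) this

private lemma mckay_endo_eq_one {k V : Type} [Field k] [IsAlgClosed k] [CharZero k]
    [AddCommGroup V] [Module k V] [FiniteDimensional k V] (f : V →ₗ[k] V) {m : ℕ} (hm : m ≠ 0)
    (h1 : f ^ m = 1) (htr : LinearMap.trace k V f = (Module.finrank k V : k)) : f = 1 := by
  let b := Module.finBasis k V
  let e := LinearMap.toMatrixAlgEquiv b
  have hM : (e f) ^ m = 1 := by rw [← map_pow, h1, map_one]
  have htr' : (e f).trace = (Fintype.card (Fin (Module.finrank k V)) : k) := by
    rw [Fintype.card_fin, ← htr, LinearMap.trace_eq_matrix_trace k b f]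
    rfl
  have := mckay_matrix_eq_one (e f) hm hM htr'
  apply e.injective
  rw [this, map_one]

end Auxiliary

/-- The `i`-th tensor power `V^{⊗i}` of an object in the monoidal category `FDRep k G`. -/
noncomputable def tensorPow {k G : Type} [Field k] [Group G] (V : FDRep k G) : ℕ → FDRep k G
  | 0 => 𝟙_ (FDRep k G)
  | n + 1 => tensorPow V n ⊗ V

section FDRepAux

open Representation

variable {k G : Type} [Field k] [Group G]

private lemma mckay_char_dim_one (V : FDRep k G) [IsAlgClosed k] [CharZero k] [Finite G]
    (hV : Function.Injective V.ρ) (g : G) (hg : V.character g = (Module.finrank k V : k)) :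
    g = 1 := by
  have hord : orderOf g ≠ 0 := by
    have : IsOfFinOrder g := isOfFinOrder_of_finite g
    exact (orderOf_pos_iff.2 this).ne'
  have h1 : (V.ρ g) ^ orderOf g = 1 := by
    rw [← map_pow, pow_orderOf_eq_one, map_one]
  have := mckay_endo_eq_one (V.ρ g) hord h1 hg
  apply hV
  rw [this, map_one]

private lemma mckay_char_tensorPow (V : FDRep k G) (lam : FDRep k G) (i : ℕ) (g : G) :
    (lam ⊗ tensorPow V i).character g = lam.character g * V.character g ^ i := by
  induction i with
  | zero =>
    show (lam ⊗ 𝟙_ (FDRep k G)).character g = _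
    rw [FDRep.char_iso (ρ_ lam), pow_zero, mul_one]
  | succ i ih =>
    show (lam ⊗ (tensorPow V i ⊗ V)).character g = _
    rw [← FDRep.char_iso (α_ lam (tensorPow V i) V), FDRep.char_tensor, Pi.mul_apply, ih,
      pow_succ]
    ring

private lemma mckay_hom_zero_char_sum [Fintype G] [Invertible (Fintype.card G : k)]
    (X Y : FDRep k G) (h : ∀ f : X ⟶ Y, f = 0) :
    ∑ g : G, X.character g⁻¹ * Y.character g = 0 := by
  have hsub : Subsingleton (X ⟶ Y) := ⟨fun f g => (h f).trans (h g).symm⟩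
  have hz : Module.finrank k (invariants ((FDRep.of (linHom X.ρ Y.ρ)).ρ)) = 0 := by
    haveI : Subsingleton (invariants ((FDRep.of (linHom X.ρ Y.ρ)).ρ)) :=
      Equiv.subsingleton (linHom.invariantsEquivFDRepHom X Y).toEquiv
    exact Module.finrank_zero_of_subsingleton
  haveI : Invertible (Nat.card G : k) := by rwa [← Fintype.card_eq_nat_card]
  have havg := FDRep.average_char_eq_finrank_invariants (FDRep.of (linHom X.ρ Y.ρ))
  rw [hz] at havg
  have hsum : ∑ g : G, (FDRep.of (linHom X.ρ Y.ρ)).character g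
      = ∑ g : G, X.character g⁻¹ * Y.character g := by
    apply Finset.sum_congr rfl
    intro g _
    exact FDRep.char_linHom X Y g
  rw [hsum] at havg
  norm_num at havg
  rcases havg with hc | hS
  · exact absurd hc (Invertible.ne_zero _)
  · exact hS

private lemma mckay_simple_finrank_pos (X : FDRep k G) (hX : Simple X) :
    0 < Module.finrank k X := by
  by_contra h
  push_neg at h
  have h0 : Module.finrank k X = 0 := by omega
  have hss : Subsingleton X := by
    have : FiniteDimensional k X := inferInstance
    exact Module.finrank_zero_iff.1 h0
  have hid : 𝟙 X = (0 : X ⟶ X) := by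
    apply Action.hom_ext
    ext v
    have : ∀ a b : X, a = b := fun a b => Subsingleton.elim a b
    exact this _ _
  exact id_nonzero X hid

end FDRepAux

/-- Let `G` be a finite group acting linearly and faithfully on a finite dimensional
vector space `V` over an algebraically closed field `k` of characteristic zero. For any
irreducible representations `λ'`, `λ` of `G` there is an `i ≥ 0` with
`Hom_G(λ', λ ⊗ V^{⊗i}) ≠ 0`. -/
theorem stmt0 {k G : Type} [Field k] [IsAlgClosed k] [CharZero k] [Group G] [Finite G]
    (V : FDRep k G) (hV : Function.Injective V.ρ)
    (lam lam' : FDRep k G) (hlam : Simple lam) (hlam' : Simple lam') :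
    ∃ i : ℕ, ∃ f : lam' ⟶ lam ⊗ tensorPow V i, f ≠ 0 := by
  classical
  haveI : Fintype G := Fintype.ofFinite G
  haveI : Invertible (Fintype.card G : k) :=
    invertibleOfNonzero (by exact_mod_cast Fintype.card_ne_zero)
  by_contra hcon
  push_neg at hcon
  -- the vanishing of all the weighted power sums
  have key : ∀ i : ℕ, ∑ g : G,
      (lam'.character g⁻¹ * lam.character g) * V.character g ^ i = 0 := by
    intro i
    have h0 := mckay_hom_zero_char_sum lam' (lam ⊗ tensorPow V i) (hcon i)
    calc ∑ g : G, (lam'.character g⁻¹ * lam.character g) * V.character g ^ i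
        = ∑ g : G, lam'.character g⁻¹ * (lam ⊗ tensorPow V i).character g := by
          apply Finset.sum_congr rfl
          intro g _
          rw [mckay_char_tensorPow V lam i g]
          ring
      _ = 0 := h0
  -- vanishing against arbitrary products
  have key2 : ∀ (t : Finset k) (i : ℕ), ∑ g : G,
      (lam'.character g⁻¹ * lam.character g) * V.character g ^ i *
        (∏ x ∈ t, (V.character g - x)) = 0 := by
    intro t
    induction t using Finset.induction with
    | empty => simpa using key
    | insert x t hx ih =>
      intro i
      have expand : ∀ g : G,
          (lam'.character g⁻¹ * lam.character g) * V.character g ^ i *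
            (∏ y ∈ insert x t, (V.character g - y))
          = (lam'.character g⁻¹ * lam.character g) * V.character g ^ (i + 1) *
              (∏ y ∈ t, (V.character g - y))
            - x * ((lam'.character g⁻¹ * lam.character g) * V.character g ^ i *
              (∏ y ∈ t, (V.character g - y))) := by
        intro g
        rw [Finset.prod_insert hx]
        ring
      calc ∑ g : G, (lam'.character g⁻¹ * lam.character g) * V.character g ^ i *
            (∏ y ∈ insert x t, (V.character g - y))
          = (∑ g : G, (lam'.character g⁻¹ * lam.character g) * V.character g ^ (i + 1) *
              (∏ y ∈ t, (V.character g - y)))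
            - x * ∑ g : G, (lam'.character g⁻¹ * lam.character g) * V.character g ^ i *
              (∏ y ∈ t, (V.character g - y)) := by
            rw [Finset.mul_sum, ← Finset.sum_sub_distrib]
            exact Finset.sum_congr rfl (fun g _ => expand g)
        _ = 0 := by rw [ih (i + 1), ih i, mul_zero, sub_zero]
  -- specialize to the product over all character values other than `dim V`
  set n : k := (Module.finrank k V : k) with hn
  set t : Finset k := (Finset.image (fun g : G => V.character g) Finset.univ).erase n with ht
  have key3 := key2 t 0
  -- all terms with `g ≠ 1` vanish; the term at `g = 1` remains
  have hsingle : ∑ g : G, (lam'.character g⁻¹ * lam.character g) * V.character g ^ 0 *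
      (∏ x ∈ t, (V.character g - x))
      = (lam'.character 1 * lam.character 1) * (∏ x ∈ t, (n - x)) := by
    rw [Finset.sum_eq_single 1]
    · have h1 : V.character 1 = n := by rw [hn]; exact_mod_cast FDRep.char_one V
      rw [h1]
      simp
    · intro g _ hg
      have hne : V.character g ≠ n := by
        intro heq
        exact hg (mckay_char_dim_one V hV g (by rw [← hn]; exact heq))
      have hmem : V.character g ∈ t := by
        rw [ht]
        exact Finset.mem_erase.2 ⟨hne, Finset.mem_image.2 ⟨g, Finset.mem_univ g, rfl⟩⟩
      rw [Finset.prod_eq_zero hmem (by rw [sub_self])]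
      ring
    · intro h
      exact absurd (Finset.mem_univ 1) h
  rw [hsingle] at key3
  -- but this product is nonzero
  have hprod : (∏ x ∈ t, (n - x)) ≠ 0 := by
    rw [Finset.prod_ne_zero_iff]
    intro x hx
    have : x ≠ n := (Finset.mem_erase.1 hx).1
    intro hzero
    exact this (by linear_combination -hzero)
  have hfr' : lam'.character 1 ≠ 0 := by
    rw [FDRep.char_one]
    exact_mod_cast (mckay_simple_finrank_pos lam' hlam').ne'
  have hfr : lam.character 1 ≠ 0 := by
    rw [FDRep.char_one]
    exact_mod_cast (mckay_simple_finrank_pos lam hlam).ne'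
  exact (mul_ne_zero (mul_ne_zero hfr' hfr) hprod) key3
end

section
/- With G = A_{m,n}^c as above, the intersection G ∩ SL₂ is cyclic of order gcd(n, m + c). -/
open Matrix

namespace Stmt5Aux

/-- The homomorphism sending a pair of units to the corresponding diagonal matrix in `GL₂`. -/
def Δ : ℂˣ × ℂˣ →* GL (Fin 2) ℂ where
  toFun p :=
    { val := Matrix.diagonal ![(p.1 : ℂ), (p.2 : ℂ)]
      inv := Matrix.diagonal ![((p.1⁻¹ : ℂˣ) : ℂ), ((p.2⁻¹ : ℂˣ) : ℂ)]
      val_inv := by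
        rw [Matrix.diagonal_mul_diagonal]
        have h : (fun i => ![(p.1 : ℂ), (p.2 : ℂ)] i * ![((p.1⁻¹ : ℂˣ) : ℂ), ((p.2⁻¹ : ℂˣ) : ℂ)] i)
            = (1 : Fin 2 → ℂ) := by
          funext i; fin_cases i <;> simp
        rw [h]; exact Matrix.diagonal_one
      inv_val := by
        rw [Matrix.diagonal_mul_diagonal]
        have h : (fun i => ![((p.1⁻¹ : ℂˣ) : ℂ), ((p.2⁻¹ : ℂˣ) : ℂ)] i * ![(p.1 : ℂ), (p.2 : ℂ)] i)
            = (1 : Fin 2 → ℂ) := by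
          funext i; fin_cases i <;> simp
        rw [h]; exact Matrix.diagonal_one }
  map_one' := by
    apply Units.ext
    show Matrix.diagonal ![((1 : ℂˣ) : ℂ), ((1 : ℂˣ) : ℂ)] = (1 : Matrix (Fin 2) (Fin 2) ℂ)
    have h : (![((1 : ℂˣ) : ℂ), ((1 : ℂˣ) : ℂ)]) = (1 : Fin 2 → ℂ) := by
      funext i; fin_cases i <;> simp
    rw [h]; exact Matrix.diagonal_one
  map_mul' p q := by
    apply Units.ext
    show Matrix.diagonal ![((p.1 * q.1 : ℂˣ) : ℂ), ((p.2 * q.2 : ℂˣ) : ℂ)]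
        = Matrix.diagonal ![(p.1 : ℂ), (p.2 : ℂ)] * Matrix.diagonal ![(q.1 : ℂ), (q.2 : ℂ)]
    rw [Matrix.diagonal_mul_diagonal]
    have h : (fun i => ![(p.1 : ℂ), (p.2 : ℂ)] i * ![(q.1 : ℂ), (q.2 : ℂ)] i)
        = ![((p.1 * q.1 : ℂˣ) : ℂ), ((p.2 * q.2 : ℂˣ) : ℂ)] := by
      funext i; fin_cases i <;> simp
    rw [h]

lemma coe_Δ (p : ℂˣ × ℂˣ) :
    ((Δ p : GL (Fin 2) ℂ) : Matrix (Fin 2) (Fin 2) ℂ) = Matrix.diagonal ![(p.1 : ℂ), (p.2 : ℂ)] :=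
  rfl

lemma Δ_injective : Function.Injective Δ := by
  intro p q h
  have h' := congrArg (fun M => ((M : GL (Fin 2) ℂ) : Matrix (Fin 2) (Fin 2) ℂ)) h
  simp only [coe_Δ] at h'
  have h1 : (p.1 : ℂ) = q.1 := by
    have := congrFun (congrFun h' 0) 0
    simpa [Matrix.diagonal] using this
  have h2 : (p.2 : ℂ) = q.2 := by
    have := congrFun (congrFun h' 1) 1
    simpa [Matrix.diagonal] using this
  exact Prod.ext (Units.ext h1) (Units.ext h2)

lemma det_Δ (p : ℂˣ × ℂˣ) :
    Matrix.GeneralLinearGroup.det (Δ p) = p.1 * p.2 := by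
  apply Units.ext
  show Matrix.det ((Δ p : GL (Fin 2) ℂ) : Matrix (Fin 2) (Fin 2) ℂ) = (p.1 : ℂ) * (p.2 : ℂ)
  rw [coe_Δ, Matrix.det_diagonal, Fin.prod_univ_two]
  simp

end Stmt5Aux

open Stmt5Aux

/-- For the abelian group `G = A_{m,n}^c = ⟨diag(ζ_m,1), diag(ζ_{mn}^c, ζ_n)⟩ ⊆ GL₂(ℂ)`,
the intersection `G ∩ SL₂` (the kernel of the determinant) is cyclic of order
`gcd(n, m + c)`. -/
theorem stmt5 (m n : ℕ) (hm : 0 < m) (hn : 0 < n) (c : ℕ) (hc : c < m)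
    (ζ : ℂ) (hζ : IsPrimitiveRoot ζ (m * n))
    (A B : GL (Fin 2) ℂ)
    (hA : (A : Matrix (Fin 2) (Fin 2) ℂ) = Matrix.diagonal ![ζ ^ n, 1])
    (hB : (B : Matrix (Fin 2) (Fin 2) ℂ) = Matrix.diagonal ![ζ ^ c, ζ ^ m]) :
    IsCyclic (↥(Subgroup.closure {A, B} ⊓ (Matrix.GeneralLinearGroup.det :
        GL (Fin 2) ℂ →* ℂˣ).ker)) ∧
    Nat.card (↥(Subgroup.closure {A, B} ⊓ (Matrix.GeneralLinearGroup.det :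
        GL (Fin 2) ℂ →* ℂˣ).ker)) = Nat.gcd n (m + c) := by
  have hmn : 0 < m * n := Nat.mul_pos hm hn
  set d : ℕ := Nat.gcd n (m + c) with hd
  have hd0 : 0 < d := Nat.gcd_pos_of_pos_left _ hn
  set n' : ℕ := n / d with hn'
  set s : ℕ := (m + c) / d with hs
  have hdn : d * n' = n := Nat.mul_div_cancel' (Nat.gcd_dvd_left _ _)
  have hds : d * s = m + c := Nat.mul_div_cancel' (Nat.gcd_dvd_right _ _)
  have hn'0 : 0 < n' := by
    rcases Nat.eq_zero_or_pos n' with h | h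
    · rw [h, Nat.mul_zero] at hdn; omega
    · exact h
  have hcop : Nat.Coprime n' s := Nat.coprime_div_gcd_div_gcd hd0
  -- the unit corresponding to ζ
  have hζu : IsUnit ζ := hζ.isUnit hmn.ne'
  set u : ℂˣ := hζu.unit with hu
  have huval : (u : ℂ) = ζ := hζu.unit_spec
  -- u ^ j = 1 iff m*n ∣ j
  have hu1 : ∀ j : ℤ, u ^ j = 1 ↔ ((m * n : ℕ) : ℤ) ∣ j := by
    intro j
    rw [Units.ext_iff, Units.val_zpow_eq_zpow_val, huval, Units.val_one]
    exact hζ.zpow_eq_one_iff_dvd j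
  have hueq : ∀ j l : ℤ, u ^ j = u ^ l ↔ ((m * n : ℕ) : ℤ) ∣ (j - l) := by
    intro j l
    rw [← hu1 (j - l), _root_.zpow_sub, mul_inv_eq_one]
  -- A and B as values of Δ
  have hA' : A = Δ (u ^ n, 1) := by
    apply Units.ext
    rw [hA, coe_Δ]
    have h : (![((u ^ n : ℂˣ) : ℂ), ((1 : ℂˣ) : ℂ)]) = ![ζ ^ n, 1] := by
      funext i; fin_cases i <;> simp [huval]
    rw [h]
  have hB' : B = Δ (u ^ c, u ^ m) := by
    apply Units.ext
    rw [hB, coe_Δ]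
    have h : (![((u ^ c : ℂˣ) : ℂ), ((u ^ m : ℂˣ) : ℂ)]) = ![ζ ^ c, ζ ^ m] := by
      funext i; fin_cases i <;> simp [huval]
    rw [h]
  -- powers of A and B
  have hpow : ∀ a b : ℤ, A ^ a * B ^ b
      = Δ (u ^ ((n : ℤ) * a + (c : ℤ) * b), u ^ ((m : ℤ) * b)) := by
    intro a b
    rw [hA', hB', ← _root_.map_zpow, ← _root_.map_zpow, ← _root_.map_mul]
    congr 1
    have h1 : ((u ^ n, (1 : ℂˣ)) ^ a) = (u ^ ((n : ℤ) * a), (1 : ℂˣ)) := by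
      refine Prod.ext ?_ ?_
      · show (u ^ n) ^ a = u ^ ((n : ℤ) * a)
        rw [← _root_.zpow_natCast u n, ← _root_.zpow_mul]
      · show (1 : ℂˣ) ^ a = 1
        simp
    have h2 : ((u ^ c, u ^ m) ^ b) = (u ^ ((c : ℤ) * b), u ^ ((m : ℤ) * b)) := by
      refine Prod.ext ?_ ?_
      · show (u ^ c) ^ b = u ^ ((c : ℤ) * b)
        rw [← _root_.zpow_natCast u c, ← _root_.zpow_mul]
      · show (u ^ m) ^ b = u ^ ((m : ℤ) * b)
        rw [← _root_.zpow_natCast u m, ← _root_.zpow_mul]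
    rw [h1, h2]
    refine Prod.ext ?_ ?_
    · show u ^ ((n : ℤ) * a) * u ^ ((c : ℤ) * b) = u ^ ((n : ℤ) * a + (c : ℤ) * b)
      rw [← _root_.zpow_add]
    · show (1 : ℂˣ) * u ^ ((m : ℤ) * b) = u ^ ((m : ℤ) * b)
      rw [one_mul]
  -- every element of the closure has this form
  have hmem : ∀ x ∈ Subgroup.closure ({A, B} : Set (GL (Fin 2) ℂ)),
      ∃ a b : ℤ, x = A ^ a * B ^ b := by
    intro x hx
    induction hx using Subgroup.closure_induction with
    | mem y hy =>
      rcases hy with hy | hy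
      · exact ⟨1, 0, by simp [hy]⟩
      · simp only [Set.mem_singleton_iff] at hy
        exact ⟨0, 1, by simp [hy]⟩
    | one => exact ⟨0, 0, by simp⟩
    | mul y z _ _ hy hz =>
      obtain ⟨a, b, rfl⟩ := hy
      obtain ⟨a', b', rfl⟩ := hz
      refine ⟨a + a', b + b', ?_⟩
      rw [hpow, hpow, hpow, ← _root_.map_mul]
      congr 1
      refine Prod.ext ?_ ?_
      · show u ^ ((n : ℤ) * a + (c : ℤ) * b) * u ^ ((n : ℤ) * a' + (c : ℤ) * b')
            = u ^ ((n : ℤ) * (a + a') + (c : ℤ) * (b + b'))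
        rw [← _root_.zpow_add]; congr 1; ring
      · show u ^ ((m : ℤ) * b) * u ^ ((m : ℤ) * b') = u ^ ((m : ℤ) * (b + b'))
        rw [← _root_.zpow_add]; congr 1; ring
    | inv y _ hy =>
      obtain ⟨a, b, rfl⟩ := hy
      refine ⟨-a, -b, ?_⟩
      rw [hpow, hpow, ← _root_.map_inv]
      congr 1
      refine Prod.ext ?_ ?_
      · show (u ^ ((n : ℤ) * a + (c : ℤ) * b))⁻¹ = u ^ ((n : ℤ) * -a + (c : ℤ) * -b)
        rw [← _root_.zpow_neg]; congr 1; ring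
      · show (u ^ ((m : ℤ) * b))⁻¹ = u ^ ((m : ℤ) * -b)
        rw [← _root_.zpow_neg]; congr 1; ring
  -- the generator
  set w : ℂˣ := u ^ (m * n') with hw
  set g : GL (Fin 2) ℂ := Δ (w⁻¹, w) with hg
  have hwz : ∀ k : ℤ, w ^ k = u ^ (((m * n' : ℕ) : ℤ) * k) := by
    intro k
    rw [hw, ← _root_.zpow_natCast u (m * n'), ← _root_.zpow_mul]
  have hw' : w = u ^ (((m * n' : ℕ)) : ℤ) := by
    rw [hw, _root_.zpow_natCast]
  have hgpow : ∀ k : ℤ, g ^ k = Δ (w ^ (-k), w ^ k) := by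
    intro k
    rw [hg, ← _root_.map_zpow]
    congr 1
    refine Prod.ext ?_ ?_
    · show (w⁻¹) ^ k = w ^ (-k)
      rw [_root_.inv_zpow, _root_.zpow_neg]
    · rfl
  -- g is in the closure
  have hgcl : g ∈ Subgroup.closure ({A, B} : Set (GL (Fin 2) ℂ)) := by
    have hge : g = A ^ (-(s : ℤ)) * B ^ ((n' : ℕ) : ℤ) := by
      rw [hpow, hg]
      congr 1
      have key : (n : ℤ) * (-(s : ℤ)) + (c : ℤ) * ((n' : ℕ) : ℤ) = -((m * n' : ℕ) : ℤ) := by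
        have h1 : (n : ℤ) * (s : ℤ) = ((m : ℤ) + (c : ℤ)) * (n' : ℤ) := by
          have h0 : n * s = (m + c) * n' := by
            rw [← hdn, ← hds]; ring
          exact_mod_cast h0
        push_cast
        nlinarith [h1]
      refine Prod.ext ?_ ?_
      · show w⁻¹ = u ^ ((n : ℤ) * (-(s : ℤ)) + (c : ℤ) * ((n' : ℕ) : ℤ))
        rw [key, hw', _root_.zpow_neg]
      · show w = u ^ ((m : ℤ) * ((n' : ℕ) : ℤ))
        rw [hw']; norm_cast
    rw [hge]
    have hAmem : A ∈ ({A, B} : Set (GL (Fin 2) ℂ)) := Set.mem_insert _ _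
    have hBmem : B ∈ ({A, B} : Set (GL (Fin 2) ℂ)) := Set.mem_insert_of_mem _ rfl
    exact mul_mem (zpow_mem (Subgroup.subset_closure hAmem) _)
      (zpow_mem (Subgroup.subset_closure hBmem) _)
  have hdetg : g ∈ (Matrix.GeneralLinearGroup.det : GL (Fin 2) ℂ →* ℂˣ).ker := by
    rw [MonoidHom.mem_ker, hg, det_Δ]
    exact inv_mul_cancel w
  -- g ^ k = 1 ↔ d ∣ k
  have hgone : ∀ k : ℤ, g ^ k = 1 ↔ (d : ℤ) ∣ k := by
    intro k
    rw [hgpow, ← _root_.map_one Δ, Δ_injective.eq_iff]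
    constructor
    · intro h
      have h2 : w ^ k = 1 := congrArg Prod.snd h
      rw [hwz, hu1] at h2
      have hmn' : ((m : ℤ) * (n' : ℤ)) * (d : ℤ) ∣ ((m : ℤ) * (n' : ℤ)) * k := by
        have e1 : ((m * n : ℕ) : ℤ) = ((m : ℤ) * (n' : ℤ)) * (d : ℤ) := by
          have e0 : (m * n : ℕ) = (m * n') * d := by rw [← hdn]; ring
          exact_mod_cast e0
        rw [e1] at h2
        have h3 : (((m * n' : ℕ)) : ℤ) * k = ((m : ℤ) * (n' : ℤ)) * k := by push_cast; ring
        rwa [h3] at h2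
      have hmnne : ((m : ℤ) * (n' : ℤ)) ≠ 0 := by
        have hpos : (0 : ℤ) < (m : ℤ) * (n' : ℤ) := by positivity
        omega
      exact (mul_dvd_mul_iff_left hmnne).mp hmn'
    · intro h
      have hwk : w ^ k = 1 := by
        rw [hwz, hu1]
        obtain ⟨t, rfl⟩ := h
        refine ⟨t, ?_⟩
        have e1 : ((m * n : ℕ) : ℤ) = (m : ℤ) * ((d : ℤ) * (n' : ℤ)) := by
          have e0 : (m * n : ℕ) = m * (d * n') := by rw [hdn]
          exact_mod_cast e0
        rw [e1]; push_cast; ring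
      have hwk' : w ^ (-k) = 1 := by rw [_root_.zpow_neg, hwk, inv_one]
      rw [hwk, hwk']
      rfl
  -- orderOf g = d
  have hord : orderOf g = d := by
    have h1 : g ^ d = 1 := by
      have h0 := (hgone (d : ℤ)).mpr dvd_rfl
      rwa [zpow_natCast] at h0
    have h2 : orderOf g ∣ d := orderOf_dvd_of_pow_eq_one h1
    have h3 : (d : ℤ) ∣ (orderOf g : ℤ) := by
      apply (hgone _).mp
      rw [zpow_natCast]
      exact pow_orderOf_eq_one g
    exact Nat.dvd_antisymm h2 (Int.natCast_dvd_natCast.mp h3)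
  -- the subgroup equality
  have heq : Subgroup.closure {A, B} ⊓ (Matrix.GeneralLinearGroup.det :
      GL (Fin 2) ℂ →* ℂˣ).ker = Subgroup.zpowers g := by
    apply le_antisymm
    · rintro x hx
      rw [Subgroup.mem_inf] at hx
      obtain ⟨hx1, hx2⟩ := hx
      obtain ⟨a, b, rfl⟩ := hmem x hx1
      rw [MonoidHom.mem_ker, hpow, det_Δ] at hx2
      have hdet : u ^ ((n : ℤ) * a + (c : ℤ) * b + (m : ℤ) * b) = 1 := by
        rw [_root_.zpow_add]; exact hx2
      rw [hu1] at hdet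
      -- deduce n' ∣ b
      have hnb : ((n : ℤ)) ∣ ((m : ℤ) + (c : ℤ)) * b := by
        obtain ⟨t, ht⟩ := hdet
        refine ⟨(m : ℤ) * t - a, ?_⟩
        have hmn2 : ((m * n : ℕ) : ℤ) = (m : ℤ) * (n : ℤ) := by push_cast; ring
        rw [hmn2] at ht
        nlinarith [ht]
      have hn'b : ((n' : ℕ) : ℤ) ∣ b := by
        have h4 : ((d : ℤ) * (n' : ℤ)) ∣ ((d : ℤ) * (s : ℤ)) * b := by
          have e1 : (d : ℤ) * (n' : ℤ) = (n : ℤ) := by exact_mod_cast hdn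
          have e2 : (d : ℤ) * (s : ℤ) = (m : ℤ) + (c : ℤ) := by
            have e0 : ((d * s : ℕ) : ℤ) = ((m + c : ℕ) : ℤ) := by exact_mod_cast hds
            push_cast at e0; linarith
          rw [e1, e2]; exact hnb
        have h5 : ((n' : ℕ) : ℤ) ∣ b * (s : ℤ) := by
          have hdz : (d : ℤ) ≠ 0 := by positivity
          have h4' : (d : ℤ) * ((n' : ℕ) : ℤ) ∣ (d : ℤ) * ((s : ℤ) * b) := by
            rwa [mul_assoc] at h4
          have h6 : ((n' : ℕ) : ℤ) ∣ (s : ℤ) * b := (mul_dvd_mul_iff_left hdz).mp h4'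
          rwa [mul_comm (s : ℤ) b] at h6
        apply Int.dvd_of_dvd_mul_left_of_gcd_one h5
        simpa [Int.gcd_natCast_natCast] using hcop
      obtain ⟨t, rfl⟩ := hn'b
      -- show x = g ^ t
      rw [Subgroup.mem_zpowers_iff]
      refine ⟨t, ?_⟩
      rw [hgpow, hpow]
      congr 1
      refine Prod.ext ?_ ?_
      · show w ^ (-t) = u ^ ((n : ℤ) * a + (c : ℤ) * ((n' : ℤ) * t))
        rw [hwz, hueq]
        obtain ⟨k, hk⟩ := hdet
        refine ⟨-k, ?_⟩
        rw [show ((m * n : ℕ) : ℤ) * -k = -(((m * n : ℕ) : ℤ) * k) by ring, ← hk]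
        push_cast
        ring
      · show w ^ t = u ^ ((m : ℤ) * ((n' : ℤ) * t))
        rw [hwz]
        congr 1
        push_cast
        ring
    · rw [Subgroup.zpowers_le]
      exact Subgroup.mem_inf.mpr ⟨hgcl, hdetg⟩
  constructor
  · rw [heq]
    have hsurj : Function.Surjective
        ((zpowersHom _ (⟨g, Subgroup.mem_zpowers g⟩ : Subgroup.zpowers g)) :
          Multiplicative ℤ →* Subgroup.zpowers g) := by
      rintro ⟨x, hx⟩
      obtain ⟨k, hk⟩ := hx
      refine ⟨Multiplicative.ofAdd k, ?_⟩
      rw [zpowersHom_apply]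
      apply Subtype.ext
      simpa using hk
    exact isCyclic_of_surjective _ hsurj
  · rw [heq, Nat.card_zpowers, hord]
end

section
/- Let e₁, e₃, k be positive integers and define a_j = j - 2j(1 - 1/e₁) - (1 - 1/e₃) for j ≤ k, a_{k+1} = (k+1) - (2k+1)(1 - 1/e₁) - (1 - 1/e₃), and a_{k+2} = (2k+2) - (4k+2)(1 - 1/e₁) - 2(1 - 1/e₃). Then min over j ∈ {1,…,k+2} of a_j equals min(a_k, a_{k+2}); moreover a_k > -1 iff 1/e₁ + 1/e₁ + 1/(ke₃) > 1, and a_{k+2} > -1 iff 1/2 + 1/e₁ + 1/((2k+1)e₃) > 1. -/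
/-- Discrepancy computation for the log resolution of an `A_{2k}`-cusp with a transverse
branch: the minimum of the discrepancies `a₁, …, a_{k+2}` equals `min (a_k) (a_{k+2})`,
`a_k > -1` iff `1/e₁ + 1/e₁ + 1/(k e₃) > 1`, and `a_{k+2} > -1` iff
`1/2 + 1/e₁ + 1/((2k+1) e₃) > 1`. -/
theorem stmt8 (e₁ e₃ k : ℕ) (he₁ : 2 ≤ e₁) (he₃ : 1 ≤ e₃) (hk : 1 ≤ k)
    (a : ℕ → ℚ)
    (ha : ∀ j ≤ k, a j = (j : ℚ) - 2 * j * (1 - 1 / e₁) - (1 - 1 / e₃))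
    (hak1 : a (k + 1) = ((k : ℚ) + 1) - (2 * k + 1) * (1 - 1 / e₁) - (1 - 1 / e₃))
    (hak2 : a (k + 2) = (2 * (k : ℚ) + 2) - (4 * k + 2) * (1 - 1 / e₁) - 2 * (1 - 1 / e₃)) :
    ((Finset.Icc 1 (k + 2)).inf' (by simp) a = min (a k) (a (k + 2))) ∧
    (a k > -1 ↔ (1 : ℚ) / e₁ + 1 / e₁ + 1 / (k * e₃) > 1) ∧
    (a (k + 2) > -1 ↔ (1 : ℚ) / 2 + 1 / e₁ + 1 / ((2 * k + 1) * e₃) > 1) := by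
  have hE1 : (2 : ℚ) ≤ (e₁ : ℚ) := by exact_mod_cast he₁
  have hE3 : (1 : ℚ) ≤ (e₃ : ℚ) := by exact_mod_cast he₃
  have hK : (1 : ℚ) ≤ (k : ℚ) := by exact_mod_cast hk
  have hE1pos : (0 : ℚ) < (e₁ : ℚ) := by linarith
  have hE3pos : (0 : ℚ) < (e₃ : ℚ) := by linarith
  have hKpos : (0 : ℚ) < (k : ℚ) := by linarith
  have hE1ne : (e₁ : ℚ) ≠ 0 := ne_of_gt hE1pos
  have hE3ne : (e₃ : ℚ) ≠ 0 := ne_of_gt hE3pos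
  have hKne : (k : ℚ) ≠ 0 := ne_of_gt hKpos
  have ht : (2 : ℚ) / e₁ ≤ 1 := by
    rw [div_le_one hE1pos]; linarith
  have h1e1 : (0 : ℚ) < 1 / e₁ := by positivity
  -- monotonicity: a k ≤ a j for 1 ≤ j ≤ k
  have hmono : ∀ j : ℕ, j ≤ k → a k ≤ a j := by
    intro j hj
    have hjQ : (j : ℚ) ≤ (k : ℚ) := by exact_mod_cast hj
    rw [ha j hj, ha k le_rfl]
    have h2inv : 2 * (1 / (e₁ : ℚ)) ≤ 1 := by
      rw [mul_one_div, div_le_one hE1pos]; linarith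
    have hp : (0:ℚ) ≤ ((k : ℚ) - j) * (1 - 2 * (1 / e₁)) :=
      mul_nonneg (by linarith) (by linarith)
    nlinarith [hp]
  -- a k < a (k+1)
  have hlt : a k < a (k + 1) := by
    rw [ha k le_rfl, hak1]
    have : (2 * (k : ℚ) + 1) * (1 - 1 / e₁) = 2 * k * (1 - 1 / e₁) + (1 - 1 / e₁) := by ring
    rw [this]
    linarith
  refine ⟨?_, ?_, ?_⟩
  · apply le_antisymm
    · apply le_min
      · exact Finset.inf'_le _ (by simp only [Finset.mem_Icc]; omega)
      · exact Finset.inf'_le _ (by simp only [Finset.mem_Icc]; omega)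
    · apply Finset.le_inf'
      intro j hj
      simp only [Finset.mem_Icc] at hj
      by_cases hjk : j ≤ k
      · exact le_trans (min_le_left _ _) (hmono j hjk)
      · have : j = k + 1 ∨ j = k + 2 := by omega
        rcases this with h | h
        · subst h; exact le_trans (min_le_left _ _) (le_of_lt hlt)
        · subst h; exact min_le_right _ _
  · have hx : (a k : ℚ) + 1 = (k : ℚ) * ((1 : ℚ) / e₁ + 1 / e₁ + 1 / (k * e₃) - 1) := by
      rw [ha k le_rfl]
      field_simp
      ring
    constructor
    · intro h
      have h0 : (0 : ℚ) < (k : ℚ) * ((1 : ℚ) / e₁ + 1 / e₁ + 1 / (k * e₃) - 1) := by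
        rw [← hx]; linarith
      rcases mul_pos_iff.mp h0 with ⟨_, h2⟩ | ⟨h1, _⟩
      · linarith
      · linarith
    · intro h
      have h0 : (0 : ℚ) < (k : ℚ) * ((1 : ℚ) / e₁ + 1 / e₁ + 1 / (k * e₃) - 1) :=
        mul_pos hKpos (by linarith)
      linarith [hx ▸ h0]
  · have hx : (a (k + 2) : ℚ) + 1 =
        (4 * (k : ℚ) + 2) * ((1 : ℚ) / 2 + 1 / e₁ + 1 / ((2 * k + 1) * e₃) - 1) := by
      rw [hak2]
      have h2k1 : (2 * (k : ℚ) + 1) ≠ 0 := by positivity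
      field_simp
      ring
    have h4k2 : (0 : ℚ) < 4 * (k : ℚ) + 2 := by linarith
    constructor
    · intro h
      have h0 : (0 : ℚ) < (4 * (k : ℚ) + 2) * ((1 : ℚ) / 2 + 1 / e₁ + 1 / ((2 * k + 1) * e₃) - 1) := by
        rw [← hx]; linarith
      rcases mul_pos_iff.mp h0 with ⟨_, h2⟩ | ⟨h1, _⟩
      · linarith
      · linarith
    · intro h
      have h0 : (0 : ℚ) < (4 * (k : ℚ) + 2) * ((1 : ℚ) / 2 + 1 / e₁ + 1 / ((2 * k + 1) * e₃) - 1) :=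
        mul_pos h4k2 (by linarith)
      linarith [hx ▸ h0]
end

section
/- Let ζ be a primitive e-th root of unity and k_ζ⟦x,y⟧ = k⟨⟨x,y⟩⟩/(yx - ζxy) the skew power series ring. Then the center of k_ζ⟦x,y⟧ is k⟦u,v⟧ where u = x^e and v = y^e. -/
/-- The centre of the skew power series ring `k_ζ⟦x,y⟧ = k⟨⟨x,y⟩⟩/(yx - ζxy)` is
`k⟦u,v⟧` with `u = x^e`, `v = y^e`. The ring `B = k_ζ⟦x,y⟧` is presented via a
coordinate system `E : B ≃ₗ[k] ((ℕ × ℕ) → k)` recording the coefficients of the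
topological basis `x^i y^j`, so that multiplication is the `ζ`-twisted convolution
(coming from `y^j x^k = ζ^{jk} x^k y^j`). The conclusion: `u = x^e` and `v = y^e` are
central, and the centre is exactly the set of power series supported on monomials
`x^i y^j` with `e ∣ i` and `e ∣ j`, i.e. the power series ring `k⟦u,v⟧`. -/
theorem stmt13 (k : Type) [Field k] [IsAlgClosed k] [CharZero k]
    (e : ℕ) (he : 0 < e) (ζ : k) (hζ : IsPrimitiveRoot ζ e)
    (B : Type) [Ring B] [Algebra k B] (x y : B)
    (E : B ≃ₗ[k] ((ℕ × ℕ) → k))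
    (hone : E 1 = fun p => if p = (0, 0) then 1 else 0)
    (hx : E x = fun p => if p = (1, 0) then 1 else 0)
    (hy : E y = fun p => if p = (0, 1) then 1 else 0)
    (hmul : ∀ a b : B, ∀ p : ℕ × ℕ, E (a * b) p =
      ∑ i ∈ Finset.range (p.1 + 1), ∑ j ∈ Finset.range (p.2 + 1),
        ζ ^ (j * (p.1 - i)) * (E a (i, j) * E b (p.1 - i, p.2 - j))) :
    x ^ e ∈ Subalgebra.center k B ∧ y ^ e ∈ Subalgebra.center k B ∧
    (Subalgebra.center k B : Set B) =
      {b : B | ∀ p : ℕ × ℕ, ¬(e ∣ p.1 ∧ e ∣ p.2) → E b p = 0} := by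
  classical
  -- general formulas for multiplication by a "monomial" a with E a = δ_{(c,d)}
  have key : ∀ (c d : ℕ) (a : B), (E a = fun p => if p = (c, d) then 1 else 0) →
      (∀ b : B, ∀ p : ℕ × ℕ, E (a * b) p =
        if c ≤ p.1 ∧ d ≤ p.2 then ζ ^ (d * (p.1 - c)) * E b (p.1 - c, p.2 - d) else 0)
      ∧ (∀ b : B, ∀ p : ℕ × ℕ, E (b * a) p =
        if c ≤ p.1 ∧ d ≤ p.2 then ζ ^ ((p.2 - d) * c) * E b (p.1 - c, p.2 - d) else 0) := by
    intro c d a ha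
    constructor
    · intro b p
      rw [hmul]
      simp only [ha, mul_ite, ite_mul, mul_one, one_mul, mul_zero, zero_mul]
      rw [← Finset.sum_product']
      rw [Finset.sum_ite_eq' ((Finset.range (p.1 + 1)) ×ˢ (Finset.range (p.2 + 1))) ((c, d) : ℕ × ℕ)
        (fun q => ζ ^ (q.2 * (p.1 - q.1)) * E b (p.1 - q.1, p.2 - q.2))]
      simp only [Finset.mem_product, Finset.mem_range, Nat.lt_succ_iff]
    · intro b p
      rw [hmul]
      simp only [ha, mul_ite, ite_mul, mul_one, one_mul, mul_zero, zero_mul]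
      rw [← Finset.sum_product']
      by_cases hcd : c ≤ p.1 ∧ d ≤ p.2
      · have hcongr : ∀ q ∈ (Finset.range (p.1 + 1)) ×ˢ (Finset.range (p.2 + 1)),
            (if (p.1 - q.1, p.2 - q.2) = ((c, d) : ℕ × ℕ) then
              ζ ^ (q.2 * (p.1 - q.1)) * E b (q.1, q.2) else 0)
            = (if q = ((p.1 - c, p.2 - d) : ℕ × ℕ) then
              ζ ^ (q.2 * (p.1 - q.1)) * E b (q.1, q.2) else 0) := by
          intro q hq
          simp only [Finset.mem_product, Finset.mem_range, Nat.lt_succ_iff] at hq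
          have hiff : ((p.1 - q.1, p.2 - q.2) = ((c, d) : ℕ × ℕ)) ↔
              (q = ((p.1 - c, p.2 - d) : ℕ × ℕ)) := by
            rw [Prod.ext_iff, Prod.ext_iff]
            simp only
            omega
          simp only [hiff]
        rw [Finset.sum_congr rfl (by
          intro q hq
          exact hcongr q hq)]
        rw [Finset.sum_ite_eq' ((Finset.range (p.1 + 1)) ×ˢ (Finset.range (p.2 + 1)))
          ((p.1 - c, p.2 - d) : ℕ × ℕ)
          (fun q => ζ ^ (q.2 * (p.1 - q.1)) * E b (q.1, q.2))]
        have hm : ((p.1 - c, p.2 - d) : ℕ × ℕ) ∈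
            (Finset.range (p.1 + 1)) ×ˢ (Finset.range (p.2 + 1)) := by
          simp only [Finset.mem_product, Finset.mem_range, Nat.lt_succ_iff]
          omega
        rw [if_pos hm, if_pos hcd]
        have : p.1 - (p.1 - c) = c := by omega
        rw [this]
      · rw [if_neg hcd]
        apply Finset.sum_eq_zero
        intro q hq
        simp only [Finset.mem_product, Finset.mem_range, Nat.lt_succ_iff] at hq
        rw [if_neg]
        intro h
        rw [Prod.ext_iff] at h
        simp only at h
        omega
  obtain ⟨hxl, hxr⟩ := key 1 0 x hx
  obtain ⟨hyl, hyr⟩ := key 0 1 y hy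
  -- powers of x and y
  have hxpow : ∀ n : ℕ, E (x ^ n) = fun p => if p = (n, 0) then 1 else 0 := by
    intro n
    induction n with
    | zero => simpa using hone
    | succ n ih =>
      funext p
      obtain ⟨p1, p2⟩ := p
      rw [pow_succ', hxl, ih]
      simp only [Prod.mk.injEq, Nat.zero_le, and_true, zero_mul, pow_zero, one_mul]
      split_ifs with h1 h2 h3 h4 <;> first | rfl | omega
  have hypow : ∀ n : ℕ, E (y ^ n) = fun p => if p = (0, n) then 1 else 0 := by
    intro n
    induction n with
    | zero => simpa using hone
    | succ n ih =>
      funext p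
      obtain ⟨p1, p2⟩ := p
      rw [pow_succ', hyl, ih]
      simp only [Nat.zero_le, true_and, Nat.sub_zero]
      by_cases h1 : 1 ≤ p2
      · rw [if_pos h1]
        by_cases h2 : p1 = 0 ∧ p2 = n + 1
        · obtain ⟨rfl, rfl⟩ := h2
          simp
        · rw [if_neg (by rw [Prod.ext_iff]; simp only; omega),
            if_neg (by rw [Prod.ext_iff]; simp only; omega)]
          ring
      · rw [if_neg h1, if_neg (by rw [Prod.ext_iff]; simp only; omega)]
  -- auxiliary: powers of ζ
  have hζe : ζ ^ e = 1 := hζ.pow_eq_one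
  have hpowone : ∀ m n : ℕ, e ∣ m → ζ ^ (n * m) = 1 := by
    rintro m n ⟨t, rfl⟩
    rw [show n * (e * t) = e * (n * t) by ring, pow_mul, hζe, one_pow]
  -- sufficiency: support condition implies central
  have hcent : ∀ b : B, (∀ p : ℕ × ℕ, ¬(e ∣ p.1 ∧ e ∣ p.2) → E b p = 0) →
      b ∈ Subalgebra.center k B := by
    intro b hb
    rw [Subalgebra.mem_center_iff]
    intro a
    apply E.injective
    funext p
    rw [hmul, hmul, ← Finset.sum_product', ← Finset.sum_product']
    refine Finset.sum_nbij' (fun q => ((p.1 - q.1, p.2 - q.2) : ℕ × ℕ))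
      (fun q => ((p.1 - q.1, p.2 - q.2) : ℕ × ℕ)) ?_ ?_ ?_ ?_ ?_
    · intro q hq
      simp only [Finset.mem_product, Finset.mem_range, Nat.lt_succ_iff] at hq ⊢
      omega
    · intro q hq
      simp only [Finset.mem_product, Finset.mem_range, Nat.lt_succ_iff] at hq ⊢
      omega
    · intro q hq
      simp only [Finset.mem_product, Finset.mem_range, Nat.lt_succ_iff] at hq
      rw [Prod.ext_iff]
      simp only
      omega
    · intro q hq
      simp only [Finset.mem_product, Finset.mem_range, Nat.lt_succ_iff] at hq
      rw [Prod.ext_iff]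
      simp only
      omega
    · intro q hq
      simp only [Finset.mem_product, Finset.mem_range, Nat.lt_succ_iff] at hq
      simp only
      have h1 : p.1 - (p.1 - q.1) = q.1 := by omega
      have h2 : p.2 - (p.2 - q.2) = q.2 := by omega
      rw [h1, h2]
      by_cases hb0 : E b (p.1 - q.1, p.2 - q.2) = 0
      · rw [hb0]; ring
      · have hdvd : e ∣ p.1 - q.1 ∧ e ∣ p.2 - q.2 := by
          by_contra hc
          exact hb0 (hb _ hc)
        rw [hpowone _ _ hdvd.1, mul_comm (p.2 - q.2) q.1, hpowone _ _ hdvd.2]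
        ring
  -- necessity: central implies support condition
  have hsupp : ∀ b : B, b ∈ Subalgebra.center k B →
      ∀ p : ℕ × ℕ, ¬(e ∣ p.1 ∧ e ∣ p.2) → E b p = 0 := by
    intro b hbc p hp
    rw [Subalgebra.mem_center_iff] at hbc
    rcases not_and_or.mp hp with h | h
    · -- ¬ e ∣ p.1 : use commutation with y
      have hcomm : E (y * b) ((p.1, p.2 + 1) : ℕ × ℕ) = E (b * y) ((p.1, p.2 + 1) : ℕ × ℕ) := by
        rw [hbc y]
      rw [hyl, hyr] at hcomm
      simp only [Nat.zero_le, true_and, if_pos (Nat.le_add_left 1 p.2),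
        Nat.add_sub_cancel, Nat.sub_zero, mul_zero, pow_zero, one_mul, mul_one] at hcomm
      by_contra hb0
      have hb0' : E b ((p.1, p.2) : ℕ × ℕ) ≠ 0 := by
        intro h0
        exact hb0 (by rwa [Prod.mk.eta] at h0)
      have h1 : (ζ ^ p.1 - 1) * E b ((p.1, p.2) : ℕ × ℕ) = 0 := by
        rw [sub_mul, one_mul, hcomm, sub_self]
      rcases mul_eq_zero.mp h1 with h2 | h2
      · exact h ((hζ.pow_eq_one_iff_dvd p.1).mp (sub_eq_zero.mp h2))
      · exact hb0' h2
    · -- ¬ e ∣ p.2 : use commutation with x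
      have hcomm : E (x * b) ((p.1 + 1, p.2) : ℕ × ℕ) = E (b * x) ((p.1 + 1, p.2) : ℕ × ℕ) := by
        rw [hbc x]
      rw [hxl, hxr] at hcomm
      simp only [Nat.zero_le, and_true, if_pos (Nat.le_add_left 1 p.1),
        Nat.add_sub_cancel, Nat.sub_zero, zero_mul, pow_zero, one_mul, mul_one] at hcomm
      by_contra hb0
      have hb0' : E b ((p.1, p.2) : ℕ × ℕ) ≠ 0 := by
        intro h0
        exact hb0 (by rwa [Prod.mk.eta] at h0)
      have h1 : (ζ ^ p.2 - 1) * E b ((p.1, p.2) : ℕ × ℕ) = 0 := by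
        rw [sub_mul, one_mul, ← hcomm, sub_self]
      rcases mul_eq_zero.mp h1 with h2 | h2
      · exact h ((hζ.pow_eq_one_iff_dvd p.2).mp (sub_eq_zero.mp h2))
      · exact hb0' h2
  refine ⟨?_, ?_, ?_⟩
  · apply hcent
    intro p hp
    rw [hxpow e]
    simp only
    rw [if_neg]
    intro hcontra
    subst hcontra
    exact hp ⟨dvd_refl e, dvd_zero e⟩
  · apply hcent
    intro p hp
    rw [hypow e]
    simp only
    rw [if_neg]
    intro hcontra
    subst hcontra
    exact hp ⟨dvd_zero e, dvd_refl e⟩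
  · ext b
    simp only [SetLike.mem_coe, Set.mem_setOf_eq]
    exact ⟨hsupp b, hcent b⟩
end
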